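/- For fixed reals β_2,...,β_n > −1/2, as β_1 → ∞ the sphere integral satisfies ∫_{∂B(0,1)} x^{2β} dσ(x) ~ 2 e^{β_2+···+β_n} (∏_{k=2}^n Γ(β_k+1/2)) · β_1^{β_1} / |β|^{|β|+(n−1)/2}, i.e., the ratio of the two sides tends to 1. -/

import Mathlib

/-!
Integrating the homogeneous function `x ↦ ∏ᵢ |xᵢ| ^ (2γᵢ)` against `exp (-‖x‖²)` once in polar
and once in Cartesian coordinates gives the closed form
`∫_{S^{n-1}} x^{2γ} dσ = 2 ∏ᵢ Γ(γᵢ + 1/2) / Γ(|γ| + n/2)`.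
With `S = β₂ + ⋯ + βₙ` and `c = S + (n-1)/2`, the quotient in the theorem is then
`Γ(b + 1/2) (b + S)^(b + c) / (Γ(b + 1/2 + c) b^b e^S)`, which tends to `1` because
`Γ(x + c) ~ x^c Γ(x)` (Wendel's inequalities, from the log-convexity of `Γ`) and
`(1 + S/b)^b → e^S`.
-/

open MeasureTheory Real Filter Set Topology

theorem integral_rpow_mul_exp_neg_sq {p : ℝ} (hp : -1 < p) :
    ∫ r in Ioi (0 : ℝ), r ^ p * exp (-r ^ 2) = Gamma ((p + 1) / 2) / 2 := by
  have h := integral_rpow_mul_exp_neg_rpow two_pos hp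
  simp only [rpow_two] at h
  rw [h]
  ring

theorem integral_abs_rpow_two_mul_exp_neg_sq {γ : ℝ} (hγ : -1 / 2 < γ) :
    ∫ t : ℝ, |t| ^ (2 * γ) * exp (-t ^ 2) = Gamma (γ + 1 / 2) := by
  have h := integral_comp_abs (f := fun t ↦ t ^ (2 * γ) * exp (-t ^ 2))
  simp only [sq_abs] at h
  rw [h, integral_rpow_mul_exp_neg_sq (by linarith)]
  ring_nf

namespace MeasureTheory

theorem integral_volumeIoiPow {F : Type*} [NormedAddCommGroup F] [NormedSpace ℝ F] (k : ℕ)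
    (f : ℝ → F) :
    ∫ r, f r.1 ∂(Measure.volumeIoiPow k) = ∫ r in Ioi (0 : ℝ), r ^ k • f r := by
  simp only [Measure.volumeIoiPow, ENNReal.ofReal]
  rw [integral_withDensity_eq_integral_smul ((measurable_subtype_coe.pow_const _).real_toNNReal),
    integral_subtype_comap measurableSet_Ioi fun r ↦ Real.toNNReal (r ^ k) • f r]
  refine setIntegral_congr_fun measurableSet_Ioi fun r hr ↦ ?_
  rw [NNReal.smul_def, Real.coe_toNNReal _ (pow_nonneg (le_of_lt hr) _)]

variable {E F : Type*} [NormedAddCommGroup E] [NormedSpace ℝ E] [FiniteDimensional ℝ E]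
  [MeasurableSpace E] [BorelSpace E] [Nontrivial E] [NormedAddCommGroup F] [NormedSpace ℝ F]
  (μ : Measure E) [μ.IsAddHaarMeasure]

theorem integral_eq_integral_toSphere_prod_volumeIoiPow (f : E → F) :
    ∫ x, f x ∂μ = ∫ p : Metric.sphere (0 : E) 1 × Ioi (0 : ℝ), f (p.2.1 • p.1.1)
      ∂(μ.toSphere.prod (.volumeIoiPow (Module.finrank ℝ E - 1))) := by
  calc ∫ x, f x ∂μ = ∫ x : ({0}ᶜ : Set E), f x ∂(μ.comap (↑)) := by
        rw [integral_subtype_comap (measurableSet_singleton _).compl, restrict_compl_singleton]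
    _ = _ := by
      rw [← μ.measurePreserving_homeomorphUnitSphereProd.integral_comp
        (Homeomorph.measurableEmbedding _)]
      congr with x
      simp only [homeomorphUnitSphereProd_apply_fst_coe, homeomorphUnitSphereProd_apply_snd_coe,
        smul_inv_smul₀ (norm_ne_zero_iff.2 x.2)]

theorem integral_mul_exp_neg_norm_sq_of_homogeneous {g : E → ℝ} {p : ℝ}
    (hg : ∀ x, ∀ r : ℝ, 0 < r → g (r • x) = r ^ p * g x)
    (hp : 0 < p + Module.finrank ℝ E) :
    ∫ x, g x * exp (-‖x‖ ^ 2) ∂μ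
      = (∫ ω, g ω ∂μ.toSphere) * (Gamma ((p + Module.finrank ℝ E) / 2) / 2) := by
  set d := Module.finrank ℝ E
  have hd : ((d - 1 : ℕ) : ℝ) = d - 1 := Nat.cast_pred Module.finrank_pos
  have hradial : ∀ r ∈ Ioi (0 : ℝ), r ^ (d - 1) • (r ^ p * exp (-r ^ 2))
      = r ^ (p + (d - 1 : ℕ)) * exp (-r ^ 2) := fun r hr ↦ by
    rw [rpow_add hr, rpow_natCast, smul_eq_mul]; ring
  calc ∫ x, g x * exp (-‖x‖ ^ 2) ∂μ
      = ∫ q : Metric.sphere (0 : E) 1 × Ioi (0 : ℝ), g q.1 * (q.2.1 ^ p * exp (-q.2.1 ^ 2))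
          ∂(μ.toSphere.prod (.volumeIoiPow (d - 1))) := by
        rw [integral_eq_integral_toSphere_prod_volumeIoiPow]
        congr with ⟨⟨ω, hω⟩, ⟨r, hr⟩⟩
        rw [mem_sphere_zero_iff_norm] at hω
        simp only [hg ω r hr, norm_smul, hω, norm_of_nonneg (le_of_lt hr), mul_one]
        ring
    _ = (∫ ω, g ω ∂μ.toSphere) * ∫ r in Ioi (0 : ℝ), r ^ (p + (d - 1 : ℕ)) * exp (-r ^ 2) := by
        rw [integral_prod_mul (fun ω : Metric.sphere (0 : E) 1 ↦ g ω)
          (fun r : Ioi (0 : ℝ) ↦ r.1 ^ p * exp (-r.1 ^ 2)),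
          integral_volumeIoiPow _ fun r ↦ r ^ p * exp (-r ^ 2),
          setIntegral_congr_fun measurableSet_Ioi hradial]
    _ = _ := by
        rw [integral_rpow_mul_exp_neg_sq (by rw [hd]; linarith), hd, add_assoc, sub_add_cancel]

end MeasureTheory

section Euclidean

variable {ι : Type*} [Fintype ι]

theorem integral_prod_abs_rpow_two_mul_exp_neg_norm_sq {γ : ι → ℝ} (hγ : ∀ i, -1 / 2 < γ i) :
    ∫ x : EuclideanSpace ℝ ι, (∏ i, |x i| ^ (2 * γ i)) * exp (-‖x‖ ^ 2)
      = ∏ i, Gamma (γ i + 1 / 2) := by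
  rw [← (EuclideanSpace.volume_preserving_symm_measurableEquiv_toLp ι).symm.integral_comp']
  have hfactor : ∀ y : ι → ℝ, (∏ i, |y i| ^ (2 * γ i)) * exp (-‖WithLp.toLp 2 y‖ ^ 2)
      = ∏ i, |y i| ^ (2 * γ i) * exp (-y i ^ 2) := fun y ↦ by
    simp only [EuclideanSpace.norm_sq_eq, norm_eq_abs, sq_abs, ← Finset.sum_neg_distrib,
      exp_sum, Finset.prod_mul_distrib]
  simp only [MeasurableEquiv.symm_symm, MeasurableEquiv.coe_toLp, PiLp.toLp_apply, hfactor]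
  rw [integral_fintype_prod_volume_eq_prod (fun i t ↦ |t| ^ (2 * γ i) * exp (-t ^ 2))]
  exact Finset.prod_congr rfl fun i _ ↦ integral_abs_rpow_two_mul_exp_neg_sq (hγ i)

theorem integral_toSphere_prod_abs_rpow_two_mul [Nonempty ι] {γ : ι → ℝ}
    (hγ : ∀ i, -1 / 2 < γ i) :
    ∫ ω : Metric.sphere (0 : EuclideanSpace ℝ ι) 1,
        ∏ i, |(ω : EuclideanSpace ℝ ι) i| ^ (2 * γ i)
        ∂(volume : Measure (EuclideanSpace ℝ ι)).toSphere
      = 2 * (∏ i, Gamma (γ i + 1 / 2)) / Gamma (∑ i, γ i + Fintype.card ι / 2) := by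
  have hdeg : 0 < 2 * ∑ i, γ i + Fintype.card ι := by
    have h := Finset.sum_pos (fun i _ ↦ by linarith [hγ i]) Finset.univ_nonempty
      (f := fun i ↦ 2 * γ i + 1)
    simpa [Finset.sum_add_distrib, Finset.mul_sum] using h
  have hhom : ∀ (x : EuclideanSpace ℝ ι) (r : ℝ), 0 < r →
      ∏ i, |(r • x) i| ^ (2 * γ i) = r ^ (2 * ∑ i, γ i) * ∏ i, |x i| ^ (2 * γ i) := by
    intro x r hr
    simp only [PiLp.smul_apply, smul_eq_mul, abs_mul, abs_of_pos hr,
      mul_rpow hr.le (abs_nonneg _), Finset.prod_mul_distrib, Finset.mul_sum,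
      rpow_sum_of_pos hr]
  have h := integral_mul_exp_neg_norm_sq_of_homogeneous (volume : Measure (EuclideanSpace ℝ ι))
    (g := fun x ↦ ∏ i, |x i| ^ (2 * γ i)) hhom (by rwa [finrank_euclideanSpace])
  rw [integral_prod_abs_rpow_two_mul_exp_neg_norm_sq hγ, finrank_euclideanSpace] at h
  have hΓ : 0 < Gamma ((2 * ∑ i, γ i + Fintype.card ι) / 2) := Gamma_pos_of_pos (by positivity)
  rw [show ∑ i, γ i + Fintype.card ι / 2 = (2 * ∑ i, γ i + Fintype.card ι) / 2 by ring,
    eq_div_iff hΓ.ne', h]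
  ring

theorem integral_toSphere_prod_abs_rpow_two_mul_update [DecidableEq ι] (i0 : ι) {β : ι → ℝ}
    (hβ : ∀ k, k ≠ i0 → -1 / 2 < β k) {b : ℝ} (hb : -1 / 2 < b) :
    ∫ ω : Metric.sphere (0 : EuclideanSpace ℝ ι) 1,
        ∏ i, |(ω : EuclideanSpace ℝ ι) i| ^ (2 * Function.update β i0 b i)
        ∂(volume : Measure (EuclideanSpace ℝ ι)).toSphere
      = 2 * (Gamma (b + 1 / 2) * ∏ i ∈ Finset.univ.erase i0, Gamma (β i + 1 / 2)) /
          Gamma (b + ∑ i ∈ Finset.univ.erase i0, β i + Fintype.card ι / 2) := by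
  have : Nonempty ι := ⟨i0⟩
  have hγ : ∀ i, -1 / 2 < Function.update β i0 b i := by
    intro i
    rcases eq_or_ne i i0 with rfl | hi
    · rwa [Function.update_self]
    · rw [Function.update_of_ne hi]; exact hβ i hi
  rw [integral_toSphere_prod_abs_rpow_two_mul hγ,
    Finset.sum_update_of_mem (Finset.mem_univ i0), Finset.sdiff_singleton_eq_erase]
  simp only [Function.apply_update (fun _ x ↦ Gamma (x + 1 / 2)),
    Finset.prod_update_of_mem (Finset.mem_univ i0), Finset.sdiff_singleton_eq_erase]

end Euclidean

theorem tendsto_add_div_add_atTop (a c : ℝ) :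
    Tendsto (fun x : ℝ ↦ (x + a) / (x + c)) atTop (𝓝 1) := by
  have h : Tendsto (fun x : ℝ ↦ 1 + (a - c) / (x + c)) atTop (𝓝 (1 + 0)) :=
    tendsto_const_nhds.add (tendsto_const_nhds.div_atTop (tendsto_atTop_add_const_right _ c
      tendsto_id))
  rw [add_zero] at h
  refine h.congr' ?_
  filter_upwards [eventually_gt_atTop (-c)] with x hx
  field_simp [show x + c ≠ 0 by linarith]
  ring

namespace Real

theorem Gamma_mul_add_mul_le_rpow_Gamma_mul_rpow_Gamma_of_nonneg {s t a b : ℝ} (hs : 0 < s)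
    (ht : 0 < t) (ha : 0 ≤ a) (hb : 0 ≤ b) (hab : a + b = 1) :
    Gamma (a * s + b * t) ≤ Gamma s ^ a * Gamma t ^ b := by
  have hlog := convexOn_log_Gamma.2 (mem_Ioi.2 hs) (mem_Ioi.2 ht) ha hb hab
  simp only [Function.comp_apply, smul_eq_mul] at hlog
  have hpos : 0 < a * s + b * t := convex_Ioi (0 : ℝ) hs ht ha hb hab
  rw [← exp_log (Gamma_pos_of_pos hpos), rpow_def_of_pos (Gamma_pos_of_pos hs),
    rpow_def_of_pos (Gamma_pos_of_pos ht), ← exp_add]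
  exact exp_le_exp.2 (by linarith)

theorem Gamma_add_le_rpow_mul_Gamma {x r : ℝ} (hx : 0 < x) (hr₀ : 0 ≤ r) (hr₁ : r ≤ 1) :
    Gamma (x + r) ≤ x ^ r * Gamma x := by
  have hΓ := Gamma_pos_of_pos hx
  calc Gamma (x + r) = Gamma ((1 - r) * x + r * (x + 1)) := by ring_nf
    _ ≤ Gamma x ^ (1 - r) * Gamma (x + 1) ^ r :=
      Gamma_mul_add_mul_le_rpow_Gamma_mul_rpow_Gamma_of_nonneg hx (by linarith) (by linarith) hr₀
        (by ring)
    _ = x ^ r * Gamma x := by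
      rw [Gamma_add_one hx.ne', mul_rpow hx.le hΓ.le, mul_left_comm, ← rpow_add hΓ,
        sub_add_cancel, rpow_one]

theorem mul_Gamma_le_rpow_mul_Gamma_add {x r : ℝ} (hx : 0 < x) (hr₀ : 0 ≤ r) (hr₁ : r ≤ 1) :
    x * Gamma x ≤ (x + r) ^ (1 - r) * Gamma (x + r) := by
  have hxr : 0 < x + r := by linarith
  have hΓ := Gamma_pos_of_pos hxr
  calc x * Gamma x = Gamma (r * (x + r) + (1 - r) * (x + r + 1)) := by
        rw [← Gamma_add_one hx.ne']; ring_nf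
    _ ≤ Gamma (x + r) ^ r * Gamma (x + r + 1) ^ (1 - r) :=
      Gamma_mul_add_mul_le_rpow_Gamma_mul_rpow_Gamma_of_nonneg hxr (by linarith) hr₀
        (by linarith) (by ring)
    _ = (x + r) ^ (1 - r) * Gamma (x + r) := by
      rw [Gamma_add_one hxr.ne', mul_rpow hxr.le hΓ.le, mul_left_comm, ← rpow_add hΓ,
        add_sub_cancel, rpow_one]

theorem tendsto_Gamma_add_div_rpow_mul_Gamma_of_le_one {r : ℝ} (hr₀ : 0 ≤ r) (hr₁ : r ≤ 1) :
    Tendsto (fun x ↦ Gamma (x + r) / (x ^ r * Gamma x)) atTop (𝓝 1) := by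
  have hlower : Tendsto (fun x ↦ (x / (x + r)) ^ (1 - r)) atTop (𝓝 1) := by
    simpa using (tendsto_add_div_add_atTop 0 r).rpow_const (p := 1 - r) (Or.inl one_ne_zero)
  refine tendsto_of_tendsto_of_tendsto_of_le_of_le' hlower tendsto_const_nhds ?_ ?_
  all_goals filter_upwards [eventually_gt_atTop 0] with x hx
  all_goals have hΓ := Gamma_pos_of_pos hx
  · rw [div_rpow hx.le (by linarith), div_le_div_iff₀ (by positivity) (by positivity),
      ← mul_assoc, ← rpow_add hx, sub_add_cancel, rpow_one]
    exact (mul_Gamma_le_rpow_mul_Gamma_add hx hr₀ hr₁).trans_eq (mul_comm _ _)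
  · rw [div_le_one (by positivity)]
    exact Gamma_add_le_rpow_mul_Gamma hx hr₀ hr₁

theorem tendsto_Gamma_add_div_rpow_mul_Gamma {c : ℝ} (hc : 0 ≤ c) :
    Tendsto (fun x ↦ Gamma (x + c) / (x ^ c * Gamma x)) atTop (𝓝 1) := by
  suffices h : ∀ m : ℕ, ∀ r, 0 ≤ r → r ≤ 1 →
      Tendsto (fun x ↦ Gamma (x + (r + m)) / (x ^ (r + m) * Gamma x)) atTop (𝓝 1) by
    simpa using h ⌊c⌋₊ (c - ⌊c⌋₊) (sub_nonneg.2 (Nat.floor_le hc))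
      (by linarith [Nat.lt_floor_add_one c])
  intro m r hr₀ hr₁
  induction m with
  | zero => simpa using tendsto_Gamma_add_div_rpow_mul_Gamma_of_le_one hr₀ hr₁
  | succ m ih =>
    have h := (tendsto_add_div_add_atTop (r + m) 0).mul ih
    rw [one_mul] at h
    refine h.congr' ?_
    filter_upwards [eventually_gt_atTop 0] with x hx
    have hΓ := Gamma_pos_of_pos hx
    have hxrm : x + (r + m) ≠ 0 := by positivity
    rw [show x + (r + (m + 1 : ℕ)) = x + (r + m) + 1 by push_cast; ring, Gamma_add_one hxrm,
      Nat.cast_succ, ← add_assoc r, rpow_add_one hx.ne', add_zero]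
    field_simp

theorem tendsto_Gamma_mul_rpow_div_Gamma_mul_rpow_self (a s : ℝ) {c : ℝ} (hc : 0 ≤ c) :
    Tendsto (fun b ↦ Gamma (b + a) * (b + s) ^ (b + c) / (Gamma (b + a + c) * b ^ b)) atTop
      (𝓝 (exp s)) := by
  have hGamma : Tendsto (fun b ↦ (b + a) ^ c * Gamma (b + a) / Gamma (b + a + c)) atTop (𝓝 1) := by
    simpa using ((tendsto_Gamma_add_div_rpow_mul_Gamma hc).comp
      (tendsto_atTop_add_const_right _ a tendsto_id)).inv₀ one_ne_zero
  have hrpow : Tendsto (fun b ↦ ((b + s) / (b + a)) ^ c) atTop (𝓝 1) := by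
    simpa using (tendsto_add_div_add_atTop s a).rpow_const (p := c) (Or.inl one_ne_zero)
  have h := (hGamma.mul hrpow).mul (tendsto_one_add_div_rpow_exp s)
  rw [one_mul, one_mul] at h
  refine h.congr' ?_
  filter_upwards [eventually_gt_atTop 0, eventually_gt_atTop (-a), eventually_gt_atTop (-s)]
    with b hb hba hbs
  have hΓ := Gamma_pos_of_pos (show 0 < b + a + c by linarith)
  have hbac : 0 < (b + a) ^ c := rpow_pos_of_pos (by linarith) c
  rw [div_rpow (by linarith) (by linarith), one_add_div hb.ne', div_rpow (by linarith) hb.le,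
    rpow_add (by linarith)]
  field_simp

end Real

theorem sphere_integral_asymptotic (n : ℕ) (i0 : Fin n)
    (β : Fin n → ℝ) (hβ : ∀ k, k ≠ i0 → -1/2 < β k) :
    Tendsto (fun b : ℝ =>
      (∫ x : Metric.sphere (0 : EuclideanSpace ℝ (Fin n)) 1,
        (∏ i : Fin n, |(x : EuclideanSpace ℝ (Fin n)) i| ^
          (2 * Function.update β i0 b i))
        ∂((volume : Measure (EuclideanSpace ℝ (Fin n))).toSphere)) /
      (2 * Real.exp (∑ i ∈ Finset.univ.erase i0, β i) *
        (∏ i ∈ Finset.univ.erase i0, Real.Gamma (β i + 1/2)) * b ^ b /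
        (∑ i, Function.update β i0 b i) ^
          ((∑ i, Function.update β i0 b i) + ((n : ℝ) - 1) / 2)))
      atTop (nhds 1) := by
  obtain ⟨S, hS⟩ : ∃ S, ∑ i ∈ Finset.univ.erase i0, β i = S := ⟨_, rfl⟩
  obtain ⟨P, hP⟩ : ∃ P, ∏ i ∈ Finset.univ.erase i0, Gamma (β i + 1 / 2) = P := ⟨_, rfl⟩
  have hP₀ : 0 < P := hP ▸ Finset.prod_pos fun i hi ↦
    Gamma_pos_of_pos (by linarith [hβ i (Finset.ne_of_mem_erase hi)])
  have hc : 0 ≤ S + ((n : ℝ) - 1) / 2 := by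
    have h := Finset.card_nsmul_le_sum (Finset.univ.erase i0) β (-1 / 2) fun i hi ↦
      (hβ i (Finset.ne_of_mem_erase hi)).le
    rw [Finset.card_erase_of_mem (Finset.mem_univ _), Finset.card_univ, Fintype.card_fin,
      nsmul_eq_mul, Nat.cast_pred i0.pos, hS] at h
    linarith
  have h := (tendsto_Gamma_mul_rpow_div_Gamma_mul_rpow_self (1 / 2) S hc).div_const (exp S)
  rw [div_self (exp_ne_zero S)] at h
  refine h.congr' ?_
  filter_upwards [eventually_gt_atTop 0, eventually_gt_atTop (-S)] with b hb hbS
  rw [integral_toSphere_prod_abs_rpow_two_mul_update i0 hβ (by linarith), Fintype.card_fin,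
    Finset.sum_update_of_mem (Finset.mem_univ i0), Finset.sdiff_singleton_eq_erase, hS, hP,
    show b + S + (n : ℝ) / 2 = b + 1 / 2 + (S + ((n : ℝ) - 1) / 2) by ring,
    show b + S + ((n : ℝ) - 1) / 2 = b + (S + ((n : ℝ) - 1) / 2) by ring]
  have hΓ := Gamma_pos_of_pos (show 0 < b + 1 / 2 + (S + ((n : ℝ) - 1) / 2) by linarith)
  have hbb : 0 < b ^ b := rpow_pos_of_pos hb b
  have hpow : 0 < (b + S) ^ (b + (S + ((n : ℝ) - 1) / 2)) := rpow_pos_of_pos (by linarith) _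
  field_simp
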